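/- arXiv:1510.08714 — 5 statements merged into one kernel-verified Lean document; each statement's English description precedes it below -/
import Mathlib

section
/- Let F be a linearly ordered field, let A and B be magnitudes of F, and let α = a + A and β = b + B be cosets (a, b ∈ F). Then exactly one of the following holds up to overlap: α ∩ β = ∅, or α ⊆ β, or β ⊆ α; that is, α ∩ β = ∅ ∨ α ⊆ β ∨ β ⊆ α. -/
open Pointwise

/-- A *magnitude* of a linearly ordered field `F` is an order-convex additive subgroup of `F`,
given as a set: it contains `0`, is closed under addition and negation, and is order-convex. -/
def IsMagnitude {F : Type*} [Field F] [LinearOrder F] [IsStrictOrderedRing F] (A : Set F) : Prop :=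
  (0 : F) ∈ A ∧ (∀ x ∈ A, ∀ y ∈ A, x + y ∈ A) ∧ (∀ x ∈ A, -x ∈ A) ∧
    (∀ x ∈ A, ∀ y ∈ A, ∀ z : F, x ≤ z → z ≤ y → z ∈ A)

/-- Order relation on subsets of `F`: `S ≤ T` iff every element of `S` is below some element of `T`. -/
def SetLE {F : Type*} [Field F] [LinearOrder F] [IsStrictOrderedRing F] (S T : Set F) : Prop :=
  ∀ x ∈ S, ∃ y ∈ T, x ≤ y

/-! Two convex subgroups of a linearly ordered group are nested, since an element of one that lies
outside the other bounds the other in absolute value. So of the two magnitudes one is contained in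
the other, say `A ⊆ B`; then `a + A` lies in a single coset of `B`, which is `b + B` as soon as
`a + A` meets `b + B`. -/

namespace AddSubgroup

section Coset

variable {G : Type*} [AddCommGroup G]

theorem mem_singleton_add_iff {H : AddSubgroup G} {a z : G} :
    z ∈ {a} + (H : Set G) ↔ -a + z ∈ H := by
  rw [Set.singleton_add, Set.image_add_left]
  rfl

theorem singleton_add_subset_of_le {A B : AddSubgroup G} (hAB : A ≤ B) {a b : G}
    (h : (({a} + (A : Set G)) ∩ ({b} + (B : Set G))).Nonempty) :
    {a} + (A : Set G) ⊆ {b} + (B : Set G) := by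
  obtain ⟨c, hcA, hcB⟩ := h
  intro z hz
  rw [mem_singleton_add_iff] at hcA hcB hz ⊢
  have hz_eq : -b + z = (-b + c) + -(-a + c) + (-a + z) := by abel
  rw [hz_eq]
  exact B.add_mem (B.add_mem hcB (B.neg_mem (hAB hcA))) (hAB hz)

end Coset

section Convex

variable {G : Type*} [AddCommGroup G] [LinearOrder G] [IsOrderedAddMonoid G]

theorem mem_of_abs_le_abs {H : AddSubgroup G} (hH : (H : Set G).OrdConnected) {x y : G}
    (hx : x ∈ H) (hyx : |y| ≤ |x|) : y ∈ H :=
  hH.out (H.neg_mem (abs_mem_iff.2 hx)) (abs_mem_iff.2 hx)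
    ⟨neg_le_of_abs_le hyx, le_of_abs_le hyx⟩

theorem le_total_of_ordConnected {A B : AddSubgroup G} (hA : (A : Set G).OrdConnected)
    (hB : (B : Set G).OrdConnected) : A ≤ B ∨ B ≤ A := by
  refine or_iff_not_imp_left.2 fun hAB y hyB => ?_
  obtain ⟨x, hxA, hxB⟩ := SetLike.not_le_iff_exists.1 hAB
  have hyx : |y| ≤ |x| :=
    (le_total |y| |x|).resolve_right fun hxy => hxB (B.mem_of_abs_le_abs hB hyB hxy)
  exact A.mem_of_abs_le_abs hA hxA hyx

end Convex

end AddSubgroup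

namespace IsMagnitude

variable {F : Type*} [Field F] [LinearOrder F] [IsStrictOrderedRing F] {A : Set F}

def toAddSubgroup (hA : IsMagnitude A) : AddSubgroup F where
  carrier := A
  zero_mem' := hA.1
  add_mem' hx hy := hA.2.1 _ hx _ hy
  neg_mem' hx := hA.2.2.1 _ hx

theorem ordConnected (hA : IsMagnitude A) : A.OrdConnected :=
  ⟨fun x hx y hy _ hz => hA.2.2.2 x hx y hy _ hz.1 hz.2⟩

end IsMagnitude

theorem coset_trichotomy {F : Type*} [Field F] [LinearOrder F] [IsStrictOrderedRing F]
    (A B : Set F) (hA : IsMagnitude A) (hB : IsMagnitude B) (a b : F) :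
    ({a} + A) ∩ ({b} + B) = ∅ ∨ ({a} + A) ⊆ ({b} + B) ∨ ({b} + B) ⊆ ({a} + A) := by
  rw [or_iff_not_imp_left, ← ne_eq, ← Set.nonempty_iff_ne_empty]
  intro hmeet
  rcases AddSubgroup.le_total_of_ordConnected (A := hA.toAddSubgroup) (B := hB.toAddSubgroup)
    hA.ordConnected hB.ordConnected with hAB | hBA
  · exact Or.inl (AddSubgroup.singleton_add_subset_of_le hAB hmeet)
  · exact Or.inr (AddSubgroup.singleton_add_subset_of_le hBA (Set.inter_comm _ _ ▸ hmeet))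
end

section
/- Let F be a linearly ordered field, A and B magnitudes of F, and a, a', b, b' ∈ F with a' ∈ a + A and b' ∈ b + B. Then a'·b' − a·b ∈ a • B + b • A + A * B, and consequently {a'·b'} + a' • B + b' • A + A * B = {a·b} + a • B + b • A + A * B; hence the product of cosets a + A and b + B, defined as {a·b} + a • B + b • A + A * B, does not depend on the choice of representatives a and b. -/
open Pointwise

/-!
Write `a' = a + α` and `b' = b + β` with `α ∈ A`, `β ∈ B`. For `x ∈ A`, `y ∈ B`, `uv ∈ A * B`,
`a' b' + a' y + b' x + u v = a b + a (β + y) + b (α + x) + (α β + α y + x β + u v)`,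
so one inclusion reduces to `A * B` being closed under addition. That holds because magnitudes
absorb scalars of absolute value at most `1`: if `|u| ≤ |u'|` and `u' ≠ 0`, then
`u v + u' v' = u' (v' + (u / u') v)` with `(u / u') v ∈ B`. The other inclusion is the same
statement with the roles of `a, b` and `a', b'` exchanged, since `a = a' + (-α)`.
-/

namespace IsMagnitude

variable {F : Type*} [Field F] [LinearOrder F] [IsStrictOrderedRing F] {A B : Set F} {x y : F}

theorem add_mem (hA : IsMagnitude A) (hx : x ∈ A) (hy : y ∈ A) : x + y ∈ A :=
  hA.2.1 x hx y hy

theorem neg_mem (hA : IsMagnitude A) (hx : x ∈ A) : -x ∈ A :=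
  hA.2.2.1 x hx

theorem abs_mem (hA : IsMagnitude A) (hx : x ∈ A) : |x| ∈ A := by
  rcases abs_choice x with h | h <;> rw [h]
  · exact hx
  · exact hA.neg_mem hx

theorem mem_of_abs_le (hA : IsMagnitude A) (hx : x ∈ A) (h : |y| ≤ |x|) : y ∈ A := by
  have hx' := hA.abs_mem hx
  obtain ⟨hlow, hupp⟩ := abs_le.mp h
  exact hA.2.2.2 _ (hA.neg_mem hx') _ hx' y hlow hupp

theorem mul_mem_of_abs_le_one (hA : IsMagnitude A) (hx : x ∈ A) {c : F} (hc : |c| ≤ 1) :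
    c * x ∈ A :=
  hA.mem_of_abs_le hx <| by
    rw [abs_mul]
    exact mul_le_of_le_one_left (abs_nonneg x) hc

theorem mul_add_mul_mem_mul (hB : IsMagnitude B) {u u' v v' : F}
    (hu : u ∈ A) (hu' : u' ∈ A) (hv : v ∈ B) (hv' : v' ∈ B) : u * v + u' * v' ∈ A * B := by
  wlog h : |u| ≤ |u'| generalizing u u' v v'
  · rw [add_comm]
    exact this hu' hu hv' hv (le_of_not_ge h)
  rcases eq_or_ne u' 0 with rfl | hu'0
  · obtain rfl : u = 0 := abs_nonpos_iff.mp (by simpa using h)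
    simpa using Set.mul_mem_mul hu hv
  have hquot : |u / u'| ≤ 1 := by
    rw [abs_div]
    exact div_le_one_of_le₀ h (abs_nonneg u')
  have hsplit : u * v + u' * v' = u' * (v' + u / u' * v) := by
    field_simp
    ring
  rw [hsplit]
  exact Set.mul_mem_mul hu' (hB.add_mem hv' (hB.mul_mem_of_abs_le_one hv hquot))

theorem add_mem_mul (hB : IsMagnitude B) (hx : x ∈ A * B) (hy : y ∈ A * B) : x + y ∈ A * B := by
  obtain ⟨u, hu, v, hv, rfl⟩ := hx
  obtain ⟨u', hu', v', hv', rfl⟩ := hy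
  exact hB.mul_add_mul_mem_mul hu hu' hv hv'

end IsMagnitude

theorem coset_mul_subset_of_mem {F : Type*} [Field F] [LinearOrder F] [IsStrictOrderedRing F]
    {A B : Set F} (hA : IsMagnitude A) (hB : IsMagnitude B) (a b : F) {α β : F}
    (hα : α ∈ A) (hβ : β ∈ B) :
    {(a + α) * (b + β)} + (a + α) • B + (b + β) • A + A * B ⊆
      {a * b} + a • B + b • A + A * B := by
  rintro _ ⟨_, ⟨_, ⟨_, rfl, _, ⟨y, hy, rfl⟩, rfl⟩, _, ⟨x, hx, rfl⟩, rfl⟩, _,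
    ⟨u, hu, v, hv, rfl⟩, rfl⟩
  have hexpand : (a + α) * (b + β) + (a + α) • y + (b + β) • x + u * v =
      a * b + a • (β + y) + b • (α + x) + (α * β + α * y + x * β + u * v) := by
    simp only [smul_eq_mul]
    ring
  dsimp only
  rw [hexpand]
  have hrest : α * β + α * y + x * β + u * v ∈ A * B :=
    hB.add_mem_mul (hB.add_mem_mul (hB.add_mem_mul (Set.mul_mem_mul hα hβ)
      (Set.mul_mem_mul hα hy)) (Set.mul_mem_mul hx hβ)) (Set.mul_mem_mul hu hv)
  exact Set.add_mem_add (Set.add_mem_add (Set.add_mem_add rfl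
    (Set.smul_mem_smul_set (hB.add_mem hβ hy))) (Set.smul_mem_smul_set (hA.add_mem hα hx))) hrest

theorem coset_mul_well_defined {F : Type*} [Field F] [LinearOrder F] [IsStrictOrderedRing F]
    (A B : Set F) (hA : IsMagnitude A) (hB : IsMagnitude B)
    (a a' b b' : F) (ha' : a' ∈ ({a} + A)) (hb' : b' ∈ ({b} + B)) :
    a' * b' - a * b ∈ a • B + b • A + A * B ∧
      {a' * b'} + a' • B + b' • A + A * B = {a * b} + a • B + b • A + A * B := by
  rw [Set.singleton_add] at ha' hb'
  obtain ⟨α, hα, rfl⟩ := ha'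
  obtain ⟨β, hβ, rfl⟩ := hb'
  dsimp only
  refine ⟨?_, (coset_mul_subset_of_mem hA hB a b hα hβ).antisymm ?_⟩
  · have hdiff : (a + α) * (b + β) - a * b = a • β + b • α + α * β := by
      simp only [smul_eq_mul]
      ring
    rw [hdiff]
    exact Set.add_mem_add (Set.add_mem_add (Set.smul_mem_smul_set hβ)
      (Set.smul_mem_smul_set hα)) (Set.mul_mem_mul hα hβ)
  · simpa using coset_mul_subset_of_mem hA hB (a + α) (b + β) (hA.neg_mem hα) (hB.neg_mem hβ)
end

section
/- Let F be a linearly ordered field and let α, β, γ be cosets of magnitudes of F. If every element of α is strictly positive (i.e. 0 < x for all x ∈ α) and β ≤ γ, then α * β ≤ α * γ, where * is the Minkowski (pointwise) product of sets (compatibility of the order on cosets with multiplication by strictly positive cosets). -/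
open Pointwise

theorem SetLE.mul_left_of_nonneg {F : Type*} [Field F] [LinearOrder F] [IsStrictOrderedRing F]
    {S T U : Set F} (hS : ∀ x ∈ S, 0 ≤ x) (h : SetLE T U) : SetLE (S * T) (S * U) := by
  rintro _ ⟨s, hs, t, ht, rfl⟩
  obtain ⟨u, hu, htu⟩ := h t ht
  exact ⟨s * u, Set.mul_mem_mul hs hu, mul_le_mul_of_nonneg_left htu (hS s hs)⟩

theorem coset_le_mul_compat_of_pos_general {F : Type*} [Field F] [LinearOrder F] [IsStrictOrderedRing F]
    (A B C : Set F)
    (a b c : F) (hpos : ∀ x ∈ ({a} + A), (0 : F) < x)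
    (h : SetLE ({b} + B) ({c} + C)) :
    SetLE (({a} + A) * ({b} + B)) (({a} + A) * ({c} + C)) :=
  h.mul_left_of_nonneg fun x hx => (hpos x hx).le

theorem coset_le_mul_compat_of_pos {F : Type*} [Field F] [LinearOrder F] [IsStrictOrderedRing F]
    (A B C : Set F) (hA : IsMagnitude A) (hB : IsMagnitude B) (hC : IsMagnitude C)
    (a b c : F) (hpos : ∀ x ∈ ({a} + A), (0 : F) < x)
    (h : SetLE ({b} + B) ({c} + C)) :
    SetLE (({a} + A) * ({b} + B)) (({a} + A) * ({c} + C)) :=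
  coset_le_mul_compat_of_pos_general A B C a b c hpos h
end

section
/- Let F be a linearly ordered field, A a magnitude of F, and let β = b + B and γ be cosets of magnitudes of F such that B ≤ β and β ≤ γ. Then A * β ≤ A * γ, where * is the Minkowski (pointwise) product of sets (compatibility of the order on cosets with multiplication by a magnitude). -/
open Pointwise

/-!
For `a ≥ 0` multiplication by `a` preserves `β ≤ γ`. For `a < 0` write `a * t = (-a) * (-t)`:
it suffices that `-β ≤ γ`, and indeed `-β ≤ B ≤ β ≤ γ`, where `-β ≤ B` comes from applying
`B ≤ β` to `-x ∈ B` for `b + x ∈ β`.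
-/

section

variable {F : Type*} [Field F] [LinearOrder F] [IsStrictOrderedRing F]

theorem SetLE.trans {S T U : Set F} (hST : SetLE S T) (hTU : SetLE T U) : SetLE S U := by
  intro x hx
  obtain ⟨y, hy, hxy⟩ := hST x hx
  obtain ⟨z, hz, hyz⟩ := hTU y hy
  exact ⟨z, hz, hxy.trans hyz⟩

theorem setLE_mul_of_setLE_of_neg_setLE {A S T : Set F} (hA : ∀ a ∈ A, -a ∈ A)
    (hST : SetLE S T) (hnegST : SetLE (-S) T) : SetLE (A * S) (A * T) := by
  rintro _ ⟨a, ha, s, hs, rfl⟩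
  rcases le_or_gt 0 a with ha₀ | ha₀
  · obtain ⟨t, ht, hst⟩ := hST s hs
    exact ⟨a * t, Set.mul_mem_mul ha ht, mul_le_mul_of_nonneg_left hst ha₀⟩
  · obtain ⟨t, ht, hst⟩ := hnegST (-s) (Set.neg_mem_neg.2 hs)
    refine ⟨-a * t, Set.mul_mem_mul (hA a ha) ht, ?_⟩
    calc a * s = -a * -s := (neg_mul_neg a s).symm
      _ ≤ -a * t := mul_le_mul_of_nonneg_left hst (neg_nonneg.2 ha₀.le)

theorem neg_singleton_add_setLE {B : Set F} {b : F} (hB : ∀ x ∈ B, -x ∈ B)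
    (hBβ : SetLE B ({b} + B)) : SetLE (-({b} + B)) B := by
  intro t ht
  rw [Set.mem_neg, Set.singleton_add] at ht
  obtain ⟨x, hx, hxt⟩ := ht
  rw [Set.singleton_add] at hBβ
  obtain ⟨_, ⟨x', hx', rfl⟩, hle⟩ := hBβ (-x) (hB x hx)
  exact ⟨x', hx', by linarith⟩

end

theorem coset_le_mul_magnitude_compat_general {F : Type*} [Field F] [LinearOrder F] [IsStrictOrderedRing F]
    (A B C : Set F) (hA : IsMagnitude A) (hB : IsMagnitude B)
    (b c : F) (hBβ : SetLE B ({b} + B)) (hβγ : SetLE ({b} + B) ({c} + C)) :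
    SetLE (A * ({b} + B)) (A * ({c} + C)) :=
  setLE_mul_of_setLE_of_neg_setLE hA.2.2.1 hβγ
    ((neg_singleton_add_setLE hB.2.2.1 hBβ).trans (hBβ.trans hβγ))

theorem coset_le_mul_magnitude_compat {F : Type*} [Field F] [LinearOrder F] [IsStrictOrderedRing F]
    (A B C : Set F) (hA : IsMagnitude A) (hB : IsMagnitude B) (hC : IsMagnitude C)
    (b c : F) (hBβ : SetLE B ({b} + B)) (hβγ : SetLE ({b} + B) ({c} + C)) :
    SetLE (A * ({b} + B)) (A * ({c} + C)) :=
  coset_le_mul_magnitude_compat_general A B C hA hB b c hBβ hβγ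
end

section
/- Let F be a linearly ordered field, A a magnitude of F, a ∈ F, and suppose the coset α = a + A is zeroless (0 ∉ a + A). Then the set of inverses of elements of α is again a coset, namely {x⁻¹ | x ∈ a + A} = {a⁻¹} + (a⁻¹·a⁻¹) • A (the formula 1/α = 1/a + A/a²). -/
/-!
Since `a ∉ A` and `A` is convex, every `d ∈ A` satisfies `2|d| < |a|`, so `|a + d| ≥ |a|/2`.
Hence `a² / (a + d) - a = -a d / (a + d)` has absolute value at most `2|d|` and lies in `A`.
Both inclusions come down to this: `(a + d)⁻¹ = a⁻¹ + a⁻² (a² / (a + d) - a)`,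
and conversely `a⁻¹ + a⁻² e` is the inverse of `a² / (a + e) = a + (a² / (a + e) - a)`.
-/

open Pointwise

lemma Set.mem_singleton_add_iff {G : Type*} [AddCommGroup G] {A : Set G} {a x : G} :
    x ∈ ({a} + A) ↔ x - a ∈ A := by
  rw [Set.singleton_add, Set.image_add_left, Set.mem_preimage, neg_add_eq_sub]

lemma Set.mem_singleton_add_smul_iff {F : Type*} [Field F] {A : Set F} {a c y : F} (hc : c ≠ 0) :
    y ∈ ({a} + c • A) ↔ c⁻¹ * (y - a) ∈ A := by
  rw [Set.mem_singleton_add_iff, Set.mem_smul_set_iff_inv_smul_mem₀ hc, smul_eq_mul]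

namespace IsMagnitude

variable {F : Type*} [Field F] [LinearOrder F] [IsStrictOrderedRing F] {A : Set F}

lemma mem_of_abs_le_abs (hA : IsMagnitude A) {x y : F} (hy : y ∈ A) (hxy : |x| ≤ |y|) :
    x ∈ A := by
  have habs : |y| ∈ A := by
    rcases abs_choice y with h | h <;> rw [h]
    exacts [hy, hA.2.2.1 y hy]
  obtain ⟨hlo, hhi⟩ := abs_le.mp hxy
  exact hA.2.2.2 _ (hA.2.2.1 _ habs) _ habs x hlo hhi

lemma two_mul_abs_lt_abs_of_notMem (hA : IsMagnitude A) {a d : F} (ha : a ∉ A) (hd : d ∈ A) :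
    2 * |d| < |a| := by
  by_contra! h
  refine ha (hA.mem_of_abs_le_abs (hA.2.1 d hd d hd) ?_)
  rwa [← two_mul, abs_mul, abs_two]

lemma add_ne_zero_of_notMem (hA : IsMagnitude A) {a d : F} (ha : a ∉ A) (hd : d ∈ A) :
    a + d ≠ 0 := by
  intro h
  rw [add_eq_zero_iff_eq_neg] at h
  exact ha (h ▸ hA.2.2.1 d hd)

lemma sq_div_add_sub_mem (hA : IsMagnitude A) {a d : F} (ha : a ∉ A) (hd : d ∈ A) :
    a ^ 2 / (a + d) - a ∈ A := by
  have hpos : 0 < |a + d| := abs_pos.mpr (hA.add_ne_zero_of_notMem ha hd)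
  have hlower : |a| ≤ 2 * |a + d| := by
    have := abs_sub_abs_le_abs_sub a (-d)
    rw [sub_neg_eq_add, abs_neg] at this
    linarith [hA.two_mul_abs_lt_abs_of_notMem ha hd]
  have heq : a ^ 2 / (a + d) - a = -(a * d) / (a + d) := by
    field_simp [hA.add_ne_zero_of_notMem ha hd]
    ring
  refine hA.mem_of_abs_le_abs (hA.2.1 d hd d hd) ?_
  rw [heq, abs_div, abs_neg, abs_mul, div_le_iff₀ hpos, ← two_mul, abs_mul, abs_two]
  nlinarith [abs_nonneg d]

end IsMagnitude

theorem coset_inv_formula {F : Type*} [Field F] [LinearOrder F] [IsStrictOrderedRing F]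
    (A : Set F) (hA : IsMagnitude A) (a : F) (hzl : (0 : F) ∉ ({a} + A)) :
    (fun x => x⁻¹) '' ({a} + A) = {a⁻¹} + (a⁻¹ * a⁻¹) • A := by
  have ha : a ∉ A := fun h => hzl (Set.mem_singleton_add_iff.mpr (by simpa using hA.2.2.1 a h))
  have ha0 : a ≠ 0 := fun h => ha (h ▸ hA.1)
  ext y
  have hcoset : (a⁻¹ * a⁻¹)⁻¹ * (y - a⁻¹) = a * (a * y - 1) := by
    field_simp
  rw [Set.mem_image, Set.mem_singleton_add_smul_iff (by positivity), hcoset]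
  constructor
  · rintro ⟨x, hx, rfl⟩
    rw [Set.mem_singleton_add_iff] at hx
    have hx0 : x ≠ 0 := by simpa using hA.add_ne_zero_of_notMem ha hx
    convert hA.sq_div_add_sub_mem ha hx using 1
    rw [add_sub_cancel]
    field_simp
  · intro he
    have hy0 : y ≠ 0 := by
      rintro rfl
      exact hA.add_ne_zero_of_notMem ha he (by ring)
    refine ⟨y⁻¹, Set.mem_singleton_add_iff.mpr ?_, inv_inv y⟩
    convert hA.sq_div_add_sub_mem ha he using 1
    field_simp
    ring
end
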